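/- arXiv:1210.1879 — 2 statements merged into one kernel-verified Lean document; each statement's English description precedes it below -/
import Mathlib

section
/- Let G be a group whose derived subgroup G′ is infinite cyclic. Then for every element g of G of finite order, the square g² lies in the center of G; that is, {g² : g ∈ T(G)} ⊆ Z(G). -/
/-!
Conjugation by any `g` restricts to an automorphism of the infinite cyclic group `G' = ⟨ρ⟩`,
so it sends `ρ` to `ρ^{±1}` and `g²` centralises `G'`. A torsion element `h` centralising `G'`
is central: for every `x` the commutator `⁅h, x⁆` commutes with `h`, hence `⁅h^n, x⁆ = ⁅h, x⁆^n`,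
so `⁅h, x⁆` is a torsion element of the torsion-free group `G'`, i.e. trivial.
-/

section

open Subgroup
open scoped commutatorElement

variable {G : Type*} [Group G]

theorem commutatorElement_pow_left_of_commute {h x : G} (hc : Commute h ⁅h, x⁆) (n : ℕ) :
    ⁅h ^ n, x⁆ = ⁅h, x⁆ ^ n := by
  induction n with
  | zero => simp
  | succ n ih =>
    rw [pow_succ', commutatorElement_mul_left_eq_conj_mul, ih, (hc.pow_right n).eq,
      mul_inv_cancel_right, pow_succ]

theorem IsOfFinOrder.commutatorElement_of_commute {h x : G} (hh : IsOfFinOrder h)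
    (hc : Commute h ⁅h, x⁆) : IsOfFinOrder ⁅h, x⁆ := by
  obtain ⟨n, hn, hpow⟩ := hh.exists_pow_eq_one
  refine isOfFinOrder_iff_pow_eq_one.mpr ⟨n, hn, ?_⟩
  rw [← commutatorElement_pow_left_of_commute hc, hpow, commutatorElement_one_left]

theorem mem_center_of_isOfFinOrder_of_commute_commutator
    (htf : ∀ c ∈ commutator G, IsOfFinOrder c → c = 1) {h : G} (hh : IsOfFinOrder h)
    (hc : ∀ c ∈ commutator G, Commute h c) : h ∈ center G := by
  refine mem_center_iff.mpr fun x => ((commutatorElement_eq_one_iff_commute).mp ?_).eq.symm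
  have hmem : ⁅h, x⁆ ∈ commutator G :=
    commutator_mem_commutator (mem_top h) (mem_top x)
  exact htf _ hmem (hh.commutatorElement_of_commute (hc _ hmem))

theorem eq_one_of_isOfFinOrder_of_mem_zpowers {ρ c : G} (hρ : ¬IsOfFinOrder ρ)
    (hc : c ∈ zpowers ρ) (hfin : IsOfFinOrder c) : c = 1 := by
  obtain ⟨k, rfl⟩ := hc
  obtain ⟨n, hn, hpow⟩ := hfin.exists_pow_eq_one
  have hkn : k * n = 0 := injective_zpow_iff_not_isOfFinOrder.mpr hρ <| by
    simp only [zpow_mul, zpow_natCast, hpow, zpow_zero]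
  rcases mul_eq_zero.mp hkn with rfl | hn0
  · exact zpow_zero ρ
  · exact absurd hn0 (by exact_mod_cast hn.ne')

theorem commute_sq_of_zpowers_normal {ρ : G} (hρ : ¬IsOfFinOrder ρ) [(zpowers ρ).Normal]
    (g : G) : Commute (g ^ 2) ρ := by
  obtain ⟨m, hm⟩ : g * ρ * g⁻¹ ∈ zpowers ρ := Normal.conj_mem ‹_› ρ (mem_zpowers ρ) g
  obtain ⟨l, hl⟩ : g⁻¹ * ρ * g⁻¹⁻¹ ∈ zpowers ρ := Normal.conj_mem ‹_› ρ (mem_zpowers ρ) g⁻¹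
  simp only at hm hl
  -- conjugation by `g⁻¹` undoes conjugation by `g`, so `m` is a unit of `ℤ`
  have hlm : l * m = 1 := injective_zpow_iff_not_isOfFinOrder.mpr hρ <| by
    calc ρ ^ (l * m) = g⁻¹ * ρ ^ m * g⁻¹⁻¹ := by rw [zpow_mul, hl, conj_zpow]
      _ = ρ ^ (1 : ℤ) := by rw [hm]; group
  have hmm : m * m = 1 := by
    rcases Int.eq_one_or_neg_one_of_mul_eq_one (mul_comm l m ▸ hlm) with rfl | rfl <;> rfl
  have hconj : g ^ 2 * ρ * (g ^ 2)⁻¹ = ρ := by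
    calc g ^ 2 * ρ * (g ^ 2)⁻¹ = g * (g * ρ * g⁻¹) * g⁻¹ := by
          simp only [pow_two, mul_inv_rev, mul_assoc]
      _ = ρ := by rw [← hm, ← conj_zpow, ← hm, ← zpow_mul, hmm, zpow_one]
  exact mul_inv_eq_iff_eq_mul.mp hconj

end

/-- If the derived subgroup of `G` is infinite cyclic, then the square of every
torsion element of `G` is central: `{g² : g ∈ T(G)} ⊆ Z(G)`. -/
theorem sq_mem_center_of_torsion {G : Type*} [Group G] (ρ : G)
    (hder : commutator G = Subgroup.zpowers ρ) (hρ : ¬ IsOfFinOrder ρ) :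
    ∀ g : G, IsOfFinOrder g → g ^ 2 ∈ Subgroup.center G := by
  intro g hg
  have : (Subgroup.zpowers ρ).Normal := hder ▸ Subgroup.commutator_normal ⊤ ⊤
  refine mem_center_of_isOfFinOrder_of_commute_commutator ?_ hg.pow ?_
  · intro c hc
    exact eq_one_of_isOfFinOrder_of_mem_zpowers hρ (hder ▸ hc)
  · intro c hc
    obtain ⟨k, rfl⟩ := hder ▸ hc
    exact (commute_sq_of_zpowers_normal hρ g).zpow_right k
end

section
/- Let G be a group whose derived subgroup G′ is infinite cyclic. Then for every element g ∈ G of finite order, the coset gK(g) equals the conjugacy class C_g of g in G, where K(g) = [g, G]. -/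
/-- `K(g) = [g, G]`, the subgroup generated by the commutators `[g, x] = g⁻¹x⁻¹gx`. -/
def Kcomm {G : Type*} [Group G] (g : G) : Subgroup G :=
  Subgroup.closure {c : G | ∃ x : G, c = g⁻¹ * x⁻¹ * g * x}

/-!
Conjugation acts on `G' = ⟨ρ⟩` by `±1`, so the centralizer `C` of `ρ` has index at most two.
On `C` the map `y ↦ [g, y]` is multiplicative (its values lie in `⟨ρ⟩`, which `C` centralizes),
so these values form a subgroup. They already exhaust all commutators `[g, x]`: if `g ∈ C`, then
`x⁻¹gx = g[g, x]` with `[g, x]` commuting with `g`, so `[g, x]` is a torsion element of `⟨ρ⟩`,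
i.e. trivial; if `g ∉ C`, then `x ∈ C` or `gx ∈ C`, and `[g, gx] = [g, x]`. Hence every element
of `K(g)` is a single commutator `[g, x]`, and `g[g, x] = x⁻¹gx`.
-/

open Subgroup
open scoped commutatorElement

section Commutators

variable {G : Type*} [Group G]

theorem isConj_iff_exists_eq_mul_commutator {g y : G} :
    IsConj g y ↔ ∃ x : G, y = g * (g⁻¹ * x⁻¹ * g * x) := by
  rw [isConj_iff]
  constructor
  · rintro ⟨c, rfl⟩
    exact ⟨c⁻¹, by group⟩
  · rintro ⟨x, rfl⟩
    exact ⟨x⁻¹, by group⟩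

theorem coset_Kcomm_eq_conjClass_of_forall_mem {g : G}
    (h : ∀ k ∈ Kcomm g, ∃ x : G, k = g⁻¹ * x⁻¹ * g * x) :
    {y : G | ∃ k ∈ Kcomm g, y = g * k} = {y : G | IsConj g y} := by
  ext y
  rw [Set.mem_ofPred_eq, Set.mem_ofPred_eq, isConj_iff_exists_eq_mul_commutator]
  constructor
  · rintro ⟨k, hk, rfl⟩
    obtain ⟨x, rfl⟩ := h k hk
    exact ⟨x, rfl⟩
  · rintro ⟨x, rfl⟩
    exact ⟨_, subset_closure ⟨x, rfl⟩, rfl⟩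

theorem commutator_mul_eq_of_commute {g x y : G} (h : Commute x (g⁻¹ * y⁻¹ * g * y)) :
    g⁻¹ * (y * x)⁻¹ * g * (y * x) = g⁻¹ * x⁻¹ * g * x * (g⁻¹ * y⁻¹ * g * y) :=
  calc g⁻¹ * (y * x)⁻¹ * g * (y * x)
      = g⁻¹ * x⁻¹ * g * x * (x⁻¹ * (g⁻¹ * y⁻¹ * g * y) * x) := by group
    _ = g⁻¹ * x⁻¹ * g * x * (g⁻¹ * y⁻¹ * g * y) := by rw [h.inv_mul_cancel]

theorem commutator_inv_eq_of_commute {g x : G} (h : Commute x (g⁻¹ * x⁻¹ * g * x)) :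
    g⁻¹ * x⁻¹⁻¹ * g * x⁻¹ = (g⁻¹ * x⁻¹ * g * x)⁻¹ :=
  calc g⁻¹ * x⁻¹⁻¹ * g * x⁻¹ = x * (g⁻¹ * x⁻¹ * g * x)⁻¹ * x⁻¹ := by group
    _ = (g⁻¹ * x⁻¹ * g * x)⁻¹ := by rw [h.inv_right.mul_inv_cancel]

theorem commutator_mem_commutator_top (g x : G) : g⁻¹ * x⁻¹ * g * x ∈ commutator G := by
  have h : ⁅g⁻¹, x⁻¹⁆ = g⁻¹ * x⁻¹ * g * x := by rw [commutatorElement_def, inv_inv, inv_inv]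
  exact h ▸ commutator_mem_commutator (mem_top g⁻¹) (mem_top x⁻¹)

theorem commutator_mul_left_self (g x : G) :
    g⁻¹ * (g * x)⁻¹ * g * (g * x) = g⁻¹ * x⁻¹ * g * x := by
  group

theorem exists_mem_eq_commutator_of_mem_Kcomm {g : G} (H : Subgroup G)
    (hcomm : ∀ x ∈ H, ∀ y ∈ H, Commute x (g⁻¹ * y⁻¹ * g * y))
    (hsurj : ∀ x : G, ∃ y ∈ H, g⁻¹ * y⁻¹ * g * y = g⁻¹ * x⁻¹ * g * x)
    {k : G} (hk : k ∈ Kcomm g) : ∃ y ∈ H, k = g⁻¹ * y⁻¹ * g * y := by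
  induction hk using closure_induction with
  | mem k hk =>
    obtain ⟨x, rfl⟩ := hk
    obtain ⟨y, hy, hyx⟩ := hsurj x
    exact ⟨y, hy, hyx.symm⟩
  | one => exact ⟨1, H.one_mem, by group⟩
  | mul k l _ _ hk hl =>
    obtain ⟨x, hx, rfl⟩ := hk
    obtain ⟨y, hy, rfl⟩ := hl
    exact ⟨y * x, H.mul_mem hy hx, (commutator_mul_eq_of_commute (hcomm x hx y hy)).symm⟩
  | inv k _ hk =>
    obtain ⟨x, hx, rfl⟩ := hk
    exact ⟨x⁻¹, H.inv_mem hx, (commutator_inv_eq_of_commute (hcomm x hx x hx)).symm⟩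

theorem IsOfFinOrder.commutator_of_commute {g x : G} (hg : IsOfFinOrder g)
    (h : Commute g (g⁻¹ * x⁻¹ * g * x)) : IsOfFinOrder (g⁻¹ * x⁻¹ * g * x) := by
  have hconj : IsOfFinOrder (x⁻¹ * g * x) := by
    simpa using (MulAut.conj x⁻¹).toMonoidHom.isOfFinOrder hg
  have hgc : g * (g⁻¹ * x⁻¹ * g * x) = x⁻¹ * g * x := by group
  have hcomm : Commute g⁻¹ (x⁻¹ * g * x) := hgc ▸ ((Commute.refl g).mul_right h).inv_left
  simpa [← hgc] using hcomm.isOfFinOrder_mul hg.inv hconj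

end Commutators

section InfiniteCyclicNormal

variable {G : Type*} [Group G] {ρ : G}

theorem eq_one_of_mem_zpowers_of_isOfFinOrder (hρ : ¬IsOfFinOrder ρ) {c : G}
    (hc : c ∈ zpowers ρ) (hfin : IsOfFinOrder c) : c = 1 := by
  obtain ⟨a, rfl⟩ := mem_zpowers_iff.mp hc
  obtain ⟨n, hn, hpow⟩ := isOfFinOrder_iff_zpow_eq_one.mp hfin
  have : a * n = 0 := injective_zpow_iff_not_isOfFinOrder.mpr hρ (by simpa [zpow_mul] using hpow)
  simp [(mul_eq_zero.mp this).resolve_right hn]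

theorem commute_of_mem_centralizer_of_mem_zpowers {y c : G} (hy : y ∈ centralizer {ρ})
    (hc : c ∈ zpowers ρ) : Commute y c := by
  obtain ⟨a, rfl⟩ := mem_zpowers_iff.mp hc
  exact Commute.zpow_right (mem_centralizer_singleton_iff.mp hy) a

theorem mem_centralizer_or_conj_eq_inv (hρ : ¬IsOfFinOrder ρ) (hN : (zpowers ρ).Normal)
    (x : G) : x ∈ centralizer {ρ} ∨ x * ρ * x⁻¹ = ρ⁻¹ := by
  obtain ⟨s, hs⟩ := mem_zpowers_iff.mp (hN.conj_mem ρ (mem_zpowers ρ) x)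
  obtain ⟨t, ht⟩ := mem_zpowers_iff.mp (hN.conj_mem ρ (mem_zpowers ρ) x⁻¹)
  have hst : s * t = 1 := by
    refine injective_zpow_iff_not_isOfFinOrder.mpr hρ ?_
    calc ρ ^ (s * t) = (x⁻¹ * ρ * x⁻¹⁻¹) ^ s := by rw [zpow_mul', ht]
      _ = x⁻¹ * ρ ^ s * x⁻¹⁻¹ := conj_zpow
      _ = ρ ^ (1 : ℤ) := by rw [hs]; group
  rcases Int.mul_eq_one_iff_eq_one_or_neg_one.mp hst with ⟨rfl, -⟩ | ⟨rfl, -⟩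
  · refine Or.inl (mem_centralizer_singleton_iff.mpr ?_)
    rw [← mul_inv_eq_iff_eq_mul, ← hs, zpow_one]
  · exact Or.inr (by simpa using hs.symm)

theorem mul_mem_centralizer_of_notMem (hρ : ¬IsOfFinOrder ρ) (hN : (zpowers ρ).Normal)
    {g x : G} (hg : g ∉ centralizer {ρ}) (hx : x ∉ centralizer {ρ}) :
    g * x ∈ centralizer {ρ} := by
  have hgρ := (mem_centralizer_or_conj_eq_inv hρ hN g).resolve_left hg
  have hxρ := (mem_centralizer_or_conj_eq_inv hρ hN x).resolve_left hx
  refine mem_centralizer_singleton_iff.mpr (mul_inv_eq_iff_eq_mul.mp ?_)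
  calc g * x * ρ * (g * x)⁻¹ = g * (x * ρ * x⁻¹) * g⁻¹ := by group
    _ = (g * ρ * g⁻¹)⁻¹ := by rw [hxρ]; group
    _ = ρ := by rw [hgρ, inv_inv]

theorem exists_mem_centralizer_commutator_eq (hρ : ¬IsOfFinOrder ρ) (hN : (zpowers ρ).Normal)
    {g : G} (hmem : ∀ x : G, g⁻¹ * x⁻¹ * g * x ∈ zpowers ρ) (hg : IsOfFinOrder g) (x : G) :
    ∃ y ∈ centralizer {ρ}, g⁻¹ * y⁻¹ * g * y = g⁻¹ * x⁻¹ * g * x := by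
  by_cases hgC : g ∈ centralizer {ρ}
  · have hcomm := commute_of_mem_centralizer_of_mem_zpowers hgC (hmem x)
    refine ⟨1, one_mem _, ?_⟩
    rw [eq_one_of_mem_zpowers_of_isOfFinOrder hρ (hmem x) (hg.commutator_of_commute hcomm)]
    group
  by_cases hxC : x ∈ centralizer {ρ}
  · exact ⟨x, hxC, rfl⟩
  · exact ⟨g * x, mul_mem_centralizer_of_notMem hρ hN hgC hxC, commutator_mul_left_self g x⟩

end InfiniteCyclicNormal

/-- If the derived subgroup of `G` is infinite cyclic, then for every torsion element
`g ∈ G` the coset `g·K(g)` equals the conjugacy class of `g` in `G`. -/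
theorem coset_Kcomm_eq_conjClass_of_cyclic_derived {G : Type*} [Group G] (ρ : G)
    (hder : commutator G = Subgroup.zpowers ρ) (hρ : ¬ IsOfFinOrder ρ)
    (g : G) (hg : IsOfFinOrder g) :
    {x : G | ∃ k ∈ Kcomm g, x = g * k} = {x : G | IsConj g x} := by
  have hN : (zpowers ρ).Normal := hder ▸ commutator_normal ⊤ ⊤
  have hmem (x : G) : g⁻¹ * x⁻¹ * g * x ∈ zpowers ρ := hder ▸ commutator_mem_commutator_top g x
  refine coset_Kcomm_eq_conjClass_of_forall_mem fun k hk => ?_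
  obtain ⟨y, -, rfl⟩ := exists_mem_eq_commutator_of_mem_Kcomm (centralizer {ρ})
    (fun x hx y _ => commute_of_mem_centralizer_of_mem_zpowers hx (hmem y))
    (exists_mem_centralizer_commutator_eq hρ hN hmem hg) hk
  exact ⟨y, rfl⟩
end
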